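/- arXiv:1804.11249 — 3 statements merged into one kernel-verified Lean document; each statement's English description precedes it below -/
import Mathlib

section
/- The smallest Lie algebra of 4×4 real matrices containing the symmetric model SYM (the span of the matrices S_{ij}, i < j) is the doubly stochastic model: equivalently, the span of the six S_{ij} together with all iterated commutators equals the 9-dimensional space of 4×4 matrices with all row and column sums zero. -/
/-!
Row sums zero means `A *ᵥ 1 = 0` and column sums zero means `1 ᵥ* A = 0`, so `DS` is closed under
products, hence under commutators.

Conversely, split `A ∈ DS` into its symmetric and antisymmetric parts. A symmetric matrix with zero
row sums is determined by its off-diagonal entries, so it is `∑_{i<j} A i j • S i j`. An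
antisymmetric matrix with zero row sums is a circulation on the complete graph `K₄`, hence a
combination of the triangles `0 → i → j → 0` with `0 < i < j`, and that triangle is `⁅S 0 i, S 0 j⁆`.
-/

/-- `S i j` : 1 in positions (i,j) and (j,i), -1 in positions (i,i) and (j,j),
0 elsewhere (for `i ≠ j`). -/
def S (i j : Fin 4) : Matrix (Fin 4) (Fin 4) ℝ :=
  fun a b => if (a = i ∧ b = j) ∨ (a = j ∧ b = i) then 1
    else if a = b ∧ (a = i ∨ a = j) then -1 else 0

/-- The doubly stochastic model: 4×4 real matrices with all row and column sums zero. -/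
def DS : Submodule ℝ (Matrix (Fin 4) (Fin 4) ℝ) where
  carrier := {A | (∀ i, ∑ j, A i j = 0) ∧ (∀ j, ∑ i, A i j = 0)}
  add_mem' := by
    rintro A B ⟨hA1, hA2⟩ ⟨hB1, hB2⟩
    constructor <;> intro i <;>
      simp [Matrix.add_apply, Finset.sum_add_distrib, hA1, hA2, hB1, hB2]
  zero_mem' := by simp
  smul_mem' := by
    rintro c A ⟨hA1, hA2⟩
    constructor <;> intro i <;>
      simp [Matrix.smul_apply, ← Finset.mul_sum, hA1, hA2]

open Matrix

lemma mem_DS_iff {A : Matrix (Fin 4) (Fin 4) ℝ} : A ∈ DS ↔ A *ᵥ 1 = 0 ∧ 1 ᵥ* A = 0 := by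
  simp only [funext_iff, mulVec, vecMul, dotProduct, Pi.one_apply, mul_one, one_mul,
    Pi.zero_apply]
  rfl

lemma mul_mem_DS {A B : Matrix (Fin 4) (Fin 4) ℝ} (hA : A ∈ DS) (hB : B ∈ DS) : A * B ∈ DS := by
  rw [mem_DS_iff] at *
  exact ⟨by rw [← mulVec_mulVec, hB.1, mulVec_zero], by rw [← vecMul_vecMul, hA.2, zero_vecMul]⟩

lemma S_mem_DS {i j : Fin 4} (hij : i ≠ j) : S i j ∈ DS := by
  refine ⟨fun k => ?_, fun k => ?_⟩ <;> fin_cases i <;> fin_cases j <;> fin_cases k <;>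
    simp_all [S, Fin.sum_univ_four]

lemma eq_sum_S_add_sum_lie {A : Matrix (Fin 4) (Fin 4) ℝ} (hA : A ∈ DS) :
    A = ∑ i, ∑ j ∈ Finset.Ioi i, ((A i j + A j i) / 2) • S i j +
      ∑ i ∈ Finset.Ioi 0, ∑ j ∈ Finset.Ioi i, ((A i j - A j i) / 2) • ⁅S 0 i, S 0 j⁆ := by
  obtain ⟨hrow, hcol⟩ := hA
  simp only [Fin.sum_univ_four] at hrow hcol
  simp only [← Finset.filter_lt_eq_Ioi, Finset.sum_filter, Fin.sum_univ_four]
  ext p q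
  fin_cases p <;> fin_cases q <;> simp [Fin.sum_univ_four, S, Ring.lie_def, mul_apply] <;>
    linarith [hrow 0, hrow 1, hrow 2, hrow 3, hcol 0, hcol 1, hcol 2, hcol 3]

lemma DS_le_of_S_mem_of_commutator_mem {L : Submodule ℝ (Matrix (Fin 4) (Fin 4) ℝ)}
    (hS : ∀ i j : Fin 4, i ≠ j → S i j ∈ L) (hC : ∀ A B, A ∈ L → B ∈ L → A * B - B * A ∈ L) :
    DS ≤ L := by
  intro A hA
  rw [eq_sum_S_add_sum_lie hA]
  refine add_mem (sum_mem fun i _ => sum_mem fun j hj => L.smul_mem _ ?_)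
    (sum_mem fun i hi => sum_mem fun j hj => L.smul_mem _ ?_)
  · exact hS i j (Finset.mem_Ioi.1 hj).ne
  · rw [Finset.mem_Ioi] at hi hj
    exact hC _ _ (hS 0 i hi.ne) (hS 0 j (hi.trans hj).ne)

/-- The Lie closure of the symmetric model SYM (the smallest linear subspace of
4×4 real matrices containing all the `S i j` and closed under the commutator)
is exactly the doubly stochastic model. -/
theorem lieClosure_SYM_eq_DS :
    sInf {L : Submodule ℝ (Matrix (Fin 4) (Fin 4) ℝ) |
        (∀ i j : Fin 4, i ≠ j → S i j ∈ L) ∧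
        (∀ A B, A ∈ L → B ∈ L → A * B - B * A ∈ L)} = DS :=
  le_antisymm
    (sInf_le ⟨fun _ _ => S_mem_DS, fun _ _ hA hB => sub_mem (mul_mem_DS hA hB) (mul_mem_DS hB hA)⟩)
    (le_sInf fun _ ⟨hS, hC⟩ => DS_le_of_S_mem_of_commutator_mem hS hC)
end

section
/- The span of the six rate matrices {Model 4.4b generators}, i.e., the set of 4×4 zero-column-sum matrices of the form [[*, γ, α, α],[γ, *, α, α],[β, β, *, δ],[β, β, δ, *]] with α, β, γ, δ ∈ ℝ (diagonal * chosen for zero column sums), is closed under the commutator [A,B] = AB - BA. -/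
/-- A general element of Model 4.4b of the Lie-Markov hierarchy: off-diagonal
entries `(1,2)=(2,1)=γ`, `(1,3)=(1,4)=(2,3)=(2,4)=α`, `(3,1)=(3,2)=(4,1)=(4,2)=β`,
`(3,4)=(4,3)=δ`, diagonals chosen so every column sums to zero. -/
def M44b (α β γ δ : ℝ) : Matrix (Fin 4) (Fin 4) ℝ :=
  !![-(γ + 2*β), γ, α, α;
     γ, -(γ + 2*β), α, α;
     β, β, -(2*α + δ), δ;
     β, β, δ, -(2*α + δ)]

/-! The `γ`, `δ` part of a Model 4.4b matrix is central in the model, so the bracket only sees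
the `α`, `β` parts, which span a two-dimensional non-abelian algebra:
`⁅M44b 1 0 0 0, M44b 0 1 0 0⁆ = M44b 2 (-2) 2 (-2)`. By bilinearity the bracket of two
elements is `α₁ β₂ - α₂ β₁` times this matrix. -/

section
attribute [local instance] LieRing.ofAssociativeRing LieAlgebra.ofAssociativeAlgebra

variable (α β γ δ α' β' γ' δ' c : ℝ)

theorem M44b_add :
    M44b α β γ δ + M44b α' β' γ' δ' = M44b (α + α') (β + β') (γ + γ') (δ + δ') := by
  ext i j
  fin_cases i <;> fin_cases j <;> simp [M44b] <;> ring

theorem M44b_smul : c • M44b α β γ δ = M44b (c * α) (c * β) (c * γ) (c * δ) := by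
  ext i j
  fin_cases i <;> fin_cases j <;> simp [M44b] <;> ring

theorem M44b_eq_add_M44b_zero_zero : M44b α β γ δ = M44b α β 0 0 + M44b 0 0 γ δ := by
  rw [M44b_add]; simp

theorem M44b_zero_zero_eq_smul_add_smul :
    M44b α β 0 0 = α • M44b 1 0 0 0 + β • M44b 0 1 0 0 := by
  rw [M44b_smul, M44b_smul, M44b_add]; simp

theorem commute_M44b_zero_zero : Commute (M44b 0 0 γ δ) (M44b α β γ' δ') := by
  ext i j
  fin_cases i <;> fin_cases j <;>
    simp [M44b, Matrix.mul_apply, Fin.sum_univ_four] <;> ring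

theorem lie_M44b_one_zero_M44b_zero_one :
    ⁅M44b 1 0 0 0, M44b 0 1 0 0⁆ = M44b 2 (-2) 2 (-2) := by
  rw [Ring.lie_def]
  ext i j
  fin_cases i <;> fin_cases j <;>
    simp [M44b] <;> norm_num

theorem lie_M44b :
    ⁅M44b α β γ δ, M44b α' β' γ' δ'⁆ =
      M44b (2 * (α * β' - α' * β)) (-(2 * (α * β' - α' * β)))
        (2 * (α * β' - α' * β)) (-(2 * (α * β' - α' * β))) := by
  have central_left := (commute_M44b_zero_zero α' β' γ δ γ' δ').lie_eq
  have central_right := (commute_M44b_zero_zero α β γ' δ' 0 0).symm.lie_eq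
  calc ⁅M44b α β γ δ, M44b α' β' γ' δ'⁆
      = ⁅M44b α β 0 0, M44b α' β' 0 0⁆ := by
        rw [M44b_eq_add_M44b_zero_zero α β, add_lie, central_left, add_zero,
          M44b_eq_add_M44b_zero_zero α', lie_add, central_right, add_zero]
    _ = (α * β' - α' * β) • ⁅M44b 1 0 0 0, M44b 0 1 0 0⁆ := by
        rw [M44b_zero_zero_eq_smul_add_smul α β, M44b_zero_zero_eq_smul_add_smul α' β']
        simp only [add_lie, lie_add, smul_lie, lie_smul, lie_self, smul_zero, add_zero, zero_add]
        rw [← lie_skew (M44b 0 1 0 0)]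
        module
    _ = _ := by
        rw [lie_M44b_one_zero_M44b_zero_one, M44b_smul]
        congr 1 <;> ring

end

/-- Model 4.4b is closed under the commutator `[A,B] = A*B - B*A`. -/
theorem model44b_closed_under_bracket
    (α₁ β₁ γ₁ δ₁ α₂ β₂ γ₂ δ₂ : ℝ) :
    ∃ α β γ δ : ℝ,
      M44b α₁ β₁ γ₁ δ₁ * M44b α₂ β₂ γ₂ δ₂ - M44b α₂ β₂ γ₂ δ₂ * M44b α₁ β₁ γ₁ δ₁
        = M44b α β γ δ :=
  ⟨_, _, _, _, lie_M44b α₁ β₁ γ₁ δ₁ α₂ β₂ γ₂ δ₂⟩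
end

section
/- For the span of B₁ = [[-2,1,1],[1,-2,-1],[1,1,0]] and B₂ = [[-2,1,-2],[1,-2,1],[1,1,1]], the only element b₁B₁ + b₂B₂ all of whose off-diagonal entries are nonnegative is the zero matrix (b₁ = b₂ = 0). -/
/-- The span of `B₁ = [[-2,1,1],[1,-2,-1],[1,1,0]]` and
`B₂ = [[-2,1,-2],[1,-2,1],[1,1,1]]` contains no nonzero stochastic matrix:
if all off-diagonal entries of `b₁•B₁ + b₂•B₂` are nonnegative then
`b₁ = b₂ = 0`. -/
theorem toy_span_no_stochastic (b₁ b₂ : ℝ)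
    (h : ∀ i j : Fin 3, i ≠ j →
      0 ≤ (b₁ • (!![-2, 1, 1; 1, -2, -1; 1, 1, 0] : Matrix (Fin 3) (Fin 3) ℝ)
          + b₂ • (!![-2, 1, -2; 1, -2, 1; 1, 1, 1] : Matrix (Fin 3) (Fin 3) ℝ)) i j) :
    b₁ = 0 ∧ b₂ = 0 := by
  have h01 : 0 ≤ b₁ + b₂ := by simpa using h 0 1 (by decide)
  have h02 : b₂ * 2 ≤ b₁ := by simpa using h 0 2 (by decide)
  have h12 : 0 ≤ -b₁ + b₂ := by simpa using h 1 2 (by decide)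
  constructor <;> linarith
end
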